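/- arXiv:2001.03149 — 10 statements merged into one kernel-verified Lean document; each statement's English description precedes it below -/
import Mathlib

section
/- Let f : ℝ → ℝ be a C^∞ function such that f(0) = 0 and f(x) ≠ 0 for every x < 0. Let G : (−∞,0) → ℝ be a differentiable function with G'(x) = −1/f(x) for every x < 0. Then |G(x)| tends to +∞ as x tends to 0 from the left, i.e. the function x ↦ |G(x)| tends to +∞ along the filter of left neighborhoods of 0. -/
open Filter Set

/-- Auxiliary: if `f` is positive and `≤ C·(-x)` on `[-1,0)` and `G' = -1/f` on `(-∞,0)`,
then `G → -∞` as `x → 0⁻`. -/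
lemma aux_tendsto_atBot (f G : ℝ → ℝ) (C : ℝ) (hC : 0 < C)
    (hpos : ∀ x ∈ Set.Ico (-1:ℝ) 0, 0 < f x)
    (hbd : ∀ x ∈ Set.Ico (-1:ℝ) 0, f x ≤ C * (-x))
    (hG : ∀ x < 0, HasDerivAt G (-1 / f x) x) :
    Tendsto G (nhdsWithin 0 (Set.Iio 0)) atBot := by
  set φ : ℝ → ℝ := fun x => G x - (1/C) * Real.log (-x) with hφdef
  have hφ' : ∀ x ∈ Set.Ioo (-1:ℝ) 0, HasDerivAt φ (-1 / f x - (1/C) * (1/x)) x := by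
    intro x hx
    have hx0 : x < 0 := hx.2
    have hlog : HasDerivAt (fun y : ℝ => Real.log (-y)) (1/x) x := by
      have h1 : HasDerivAt (fun y : ℝ => -y) (-1 : ℝ) x := (hasDerivAt_id x).neg
      have h2 := (Real.hasDerivAt_log (by linarith : -x ≠ 0)).comp x h1
      exact h2.congr_deriv (by ring)
    exact ((hG x hx0).sub ((hlog.const_mul (1/C)).congr_deriv (by ring)))
  have hanti : AntitoneOn φ (Set.Ico (-(1:ℝ)/2) 0) := by
    have hsub : Set.Ico (-(1:ℝ)/2) 0 ⊆ Set.Ioo (-1:ℝ) 0 := by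
      intro x hx; exact ⟨by linarith [hx.1], hx.2⟩
    have hint : interior (Set.Ico (-(1:ℝ)/2) 0) = Set.Ioo (-(1:ℝ)/2) 0 := interior_Ico
    apply antitoneOn_of_hasDerivWithinAt_nonpos (convex_Ico _ _)
    · intro x hx
      exact ((hφ' x (hsub hx)).continuousAt).continuousWithinAt
    · intro x hx
      rw [hint] at hx
      exact ((hφ' x (hsub (Set.Ioo_subset_Ico_self hx))).hasDerivWithinAt)
    · intro x hx
      rw [hint] at hx
      have hx0 : x < 0 := hx.2
      have hx1 : x ∈ Set.Ico (-1:ℝ) 0 := ⟨by linarith [hx.1], hx.2⟩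
      have hfpos := hpos x hx1
      have hfle := hbd x hx1
      have hCx : 0 < C * (-x) := mul_pos hC (by linarith)
      have h1 : 1 / (C * (-x)) ≤ 1 / f x := one_div_le_one_div_of_le hfpos hfle
      have h2 : -1 / f x ≤ -(1 / (C * (-x))) := by
        rw [neg_div]; linarith
      have h3 : -(1 / (C * (-x))) = (1/C) * (1/x) := by
        field_simp
      linarith [h2, h3 ▸ h2]
  have hmem : Set.Ioo (-(1:ℝ)/2) 0 ∈ nhdsWithin (0:ℝ) (Set.Iio 0) := by
    rw [mem_nhdsWithin]
    exact ⟨Set.Ioi (-(1:ℝ)/2), isOpen_Ioi, by norm_num, fun x hx => ⟨hx.1, hx.2⟩⟩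
  have ha : (-(1:ℝ)/2) ∈ Set.Ico (-(1:ℝ)/2) 0 := ⟨le_refl _, by norm_num⟩
  have hbound : ∀ x ∈ Set.Ioo (-(1:ℝ)/2) 0, G x ≤ φ (-(1:ℝ)/2) + (1/C) * Real.log (-x) := by
    intro x hx
    have := hanti ha (Set.Ioo_subset_Ico_self hx) (le_of_lt hx.1)
    simp only [hφdef] at this ⊢
    linarith
  have hlogtendsto : Tendsto (fun x : ℝ => Real.log (-x)) (nhdsWithin 0 (Set.Iio 0)) atBot := by
    apply Real.tendsto_log_nhdsGT_zero.comp
    apply tendsto_nhdsWithin_of_tendsto_nhds_of_eventually_within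
    · simpa using (continuous_neg.tendsto (0:ℝ)).mono_left nhdsWithin_le_nhds
    · filter_upwards [self_mem_nhdsWithin] with x hx
      simpa using hx
  have hub : Tendsto (fun x : ℝ => φ (-(1:ℝ)/2) + (1/C) * Real.log (-x))
      (nhdsWithin 0 (Set.Iio 0)) atBot := by
    apply tendsto_atBot_add_const_left
    exact (hlogtendsto.const_mul_atBot (by positivity))
  apply tendsto_atBot_mono' _ _ hub
  filter_upwards [hmem] with x hx
  exact hbound x hx

/-- If `f` is `C^∞` with `f 0 = 0` and `f x ≠ 0` for `x < 0`, and `G` is a primitive of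
`-1/f` on `(-∞, 0)`, then `|G|` tends to `+∞` as `x → 0⁻`. -/
theorem abs_primitive_neg_inv_tendsto_atTop
    (f G : ℝ → ℝ) (hf : ContDiff ℝ (⊤ : ℕ∞) f) (hf0 : f 0 = 0)
    (hfne : ∀ x < 0, f x ≠ 0)
    (hG : ∀ x < 0, HasDerivAt G (-1 / f x) x) :
    Tendsto (fun x => |G x|) (nhdsWithin 0 (Set.Iio 0)) atTop := by
  -- Lipschitz-type bound: |f x| ≤ C * (-x) on [-1, 0]
  have hderiv : Continuous (deriv f) := hf.continuous_deriv (by simp)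
  obtain ⟨C₀, hC₀⟩ := (isCompact_Icc (a := (-1:ℝ)) (b := 0)).exists_bound_of_continuousOn
    hderiv.continuousOn
  set C : ℝ := max C₀ 1 with hCdef
  have hC : 0 < C := lt_of_lt_of_le one_pos (le_max_right _ _)
  have hfd : ∀ x ∈ Set.Icc (-1:ℝ) 0, HasDerivWithinAt f (deriv f x) (Set.Icc (-1:ℝ) 0) x :=
    fun x _ => ((hf.differentiable (by simp)).differentiableAt.hasDerivAt).hasDerivWithinAt
  have hbd : ∀ x ∈ Set.Icc (-1:ℝ) 0, |f x| ≤ C * (-x) := by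
    intro x hx
    have h := (convex_Icc (-1:ℝ) 0).norm_image_sub_le_of_norm_hasDerivWithin_le (C := C)
      hfd (fun y hy => le_trans (hC₀ y hy) (le_max_left _ _))
      (Set.right_mem_Icc.2 (by norm_num)) hx
    simp only [Real.norm_eq_abs, hf0, sub_zero] at h
    rwa [abs_of_nonpos hx.2] at h
  -- Sign of f is constant on (-∞, 0); in particular on [-1, 0).
  have hIVT : ∀ a b : ℝ, a < 0 → b < 0 → f a < 0 → 0 < f b → False := by
    intro a b ha hb hfa hfb
    rcases le_total a b with hab | hab
    · obtain ⟨c, hc, hfc⟩ := intermediate_value_Icc hab hf.continuous.continuousOn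
        (⟨le_of_lt hfa, le_of_lt hfb⟩ : (0:ℝ) ∈ Set.Icc (f a) (f b))
      exact hfne c (lt_of_le_of_lt hc.2 hb) hfc
    · obtain ⟨c, hc, hfc⟩ := intermediate_value_Icc' hab hf.continuous.continuousOn
        (⟨le_of_lt hfa, le_of_lt hfb⟩ : (0:ℝ) ∈ Set.Icc (f a) (f b))
      exact hfne c (lt_of_le_of_lt hc.2 ha) hfc
  by_cases hsign : 0 < f (-(1:ℝ)/2)
  · -- f positive on (-∞, 0)
    have hpos : ∀ x ∈ Set.Ico (-1:ℝ) 0, 0 < f x := by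
      intro x hx
      rcases lt_trichotomy (f x) 0 with h | h | h
      · exact absurd (hIVT x (-(1:ℝ)/2) hx.2 (by norm_num) h hsign) (fun h => h)
      · exact absurd h (hfne x hx.2)
      · exact h
    have hbd' : ∀ x ∈ Set.Ico (-1:ℝ) 0, f x ≤ C * (-x) := fun x hx =>
      le_trans (le_abs_self _) (hbd x (Set.Ico_subset_Icc_self hx))
    have := aux_tendsto_atBot f G C hC hpos hbd' hG
    exact (tendsto_abs_atBot_atTop.comp this)
  · -- f negative on (-∞, 0); apply aux to -f, -G
    have hneg : f (-(1:ℝ)/2) < 0 :=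
      lt_of_le_of_ne (not_lt.1 hsign) (hfne _ (by norm_num))
    have hpos : ∀ x ∈ Set.Ico (-1:ℝ) 0, 0 < (-f) x := by
      intro x hx
      simp only [Pi.neg_apply, neg_pos]
      rcases lt_trichotomy (f x) 0 with h | h | h
      · exact h
      · exact absurd h (hfne x hx.2)
      · exact absurd (hIVT (-(1:ℝ)/2) x (by norm_num) hx.2 hneg h) (fun h => h)
    have hbd' : ∀ x ∈ Set.Ico (-1:ℝ) 0, (-f) x ≤ C * (-x) := by
      intro x hx
      simp only [Pi.neg_apply]
      calc -f x ≤ |f x| := neg_le_abs _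
      _ ≤ C * (-x) := hbd x (Set.Ico_subset_Icc_self hx)
    have hG' : ∀ x < 0, HasDerivAt (-G) (-1 / (-f) x) x := by
      intro x hx
      have := (hG x hx).neg
      exact this.congr_deriv (by simp only [Pi.neg_apply]; ring)
    have := aux_tendsto_atBot (-f) (-G) C hC hpos hbd' hG'
    have h2 := tendsto_abs_atBot_atTop.comp this
    refine h2.congr (fun x => ?_)
    simp [abs_neg]
end

section
/- Let f : ℝ → ℝ be a C^∞ function with f(0) = 0. Then the Lebesgue integral over the interval (−1, 0) of the function x ↦ 1/|f(x)| (a nonnegative function with values in [0,+∞], with the convention 1/0 = +∞) is equal to +∞. -/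
open MeasureTheory Set

/-- If `f` is `C^∞` with `f 0 = 0`, then the Lebesgue integral of `1/|f|`
(with the convention `1/0 = ∞`) over `(-1, 0)` is infinite. -/
theorem lintegral_inv_abs_eq_top_of_smooth_zero
    (f : ℝ → ℝ) (hf : ContDiff ℝ (⊤ : ℕ∞) f) (hf0 : f 0 = 0) :
    ∫⁻ x in Ioo (-1 : ℝ) 0, (ENNReal.ofReal |f x|)⁻¹ = ⊤ := by
  obtain ⟨K, t, ht, hlip⟩ :=
    ((hf.of_le (by simp)).contDiffAt (x := (0 : ℝ))).exists_lipschitzOnWith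
  obtain ⟨ε, hε, hball⟩ := Metric.mem_nhds_iff.mp ht
  set δ : ℝ := min ε 1 with hδdef
  have hδ : 0 < δ := lt_min hε one_pos
  have hδ1 : δ ≤ 1 := min_le_right _ _
  set C : ℝ := (K : ℝ) + 1 with hC
  have hCpos : 0 < C := by positivity
  have hbound : ∀ x ∈ Ioo (-δ) 0, |f x| ≤ C * (-x) := by
    intro x hx
    have hxε : x ∈ Metric.ball (0 : ℝ) ε := by
      simp only [Metric.mem_ball, Real.dist_eq, sub_zero]
      rw [abs_of_neg hx.2]
      have := min_le_left ε (1 : ℝ)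
      have := hx.1
      simp only [hδdef] at this
      linarith
    have h0 : (0 : ℝ) ∈ t := mem_of_mem_nhds ht
    have hd := hlip.dist_le_mul x (hball hxε) 0 h0
    rw [hf0, Real.dist_eq, Real.dist_eq, sub_zero, sub_zero] at hd
    calc |f x| ≤ (K : ℝ) * |x| := hd
      _ ≤ C * (-x) := by
          rw [abs_of_neg hx.2]
          have hxn : 0 ≤ -x := by linarith [hx.2]
          have : (K : ℝ) ≤ C := by simp [hC]
          nlinarith
  have hkey : ∫⁻ x in Ioo (-δ) 0, ENNReal.ofReal ((C * (-x))⁻¹) = ⊤ := by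
    by_contra hfin
    have hmeas : AEStronglyMeasurable (fun x : ℝ => (C * (-x))⁻¹)
        (volume.restrict (Ioo (-δ) 0)) :=
      ((measurable_const.mul measurable_neg).inv).aestronglyMeasurable
    have hint : IntegrableOn (fun x : ℝ => (C * (-x))⁻¹) (Ioo (-δ) 0) := by
      refine ⟨hmeas, ?_⟩
      rw [hasFiniteIntegral_iff_norm]
      have hcongr : ∀ x ∈ Ioo (-δ) (0 : ℝ),
          ENNReal.ofReal ‖(C * (-x))⁻¹‖ = ENNReal.ofReal ((C * (-x))⁻¹) := by
        intro x hx
        rw [Real.norm_eq_abs, abs_of_pos]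
        have : 0 < -x := by linarith [hx.2]
        positivity
      rw [setLIntegral_congr_fun measurableSet_Ioo hcongr]
      exact lt_top_iff_ne_top.mpr hfin
    have h1 : Integrable ((Ioo (-δ) (0 : ℝ)).indicator fun x : ℝ => (C * (-x))⁻¹) :=
      (integrable_indicator_iff measurableSet_Ioo).mpr hint
    have h2 := h1.comp_neg
    have h3 : IntegrableOn (fun x : ℝ => (C * x)⁻¹) (Ioo 0 δ) := by
      rw [← integrable_indicator_iff measurableSet_Ioo]
      refine h2.congr (Filter.Eventually.of_forall fun x => ?_)
      by_cases hx : x ∈ Ioo (0 : ℝ) δ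
      · have hmx : -x ∈ Ioo (-δ) (0 : ℝ) := ⟨by linarith [hx.2], by linarith [hx.1]⟩
        simp [indicator_of_mem hx, indicator_of_mem hmx]
      · have hmx : -x ∉ Ioo (-δ) (0 : ℝ) := by
          intro h
          exact hx ⟨by linarith [h.2], by linarith [h.1]⟩
        simp [indicator_of_notMem hx, indicator_of_notMem hmx]
    have h4 : IntegrableOn (fun x : ℝ => x⁻¹) (Ioo (0 : ℝ) δ) := by
      have h3' : IntegrableOn (fun x : ℝ => C * (C * x)⁻¹) (Ioo (0:ℝ) δ) := h3.const_mul C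
      refine h3'.congr_fun (fun x hx => ?_) measurableSet_Ioo
      dsimp only
      rw [mul_inv, ← mul_assoc, mul_inv_cancel₀ hCpos.ne', one_mul]
    have h5 : IntegrableOn (fun x : ℝ => x ^ (-1 : ℝ)) (Ioo (0 : ℝ) δ) := by
      refine h4.congr_fun (fun x hx => ?_) measurableSet_Ioo
      rw [Real.rpow_neg_one]
    rw [intervalIntegral.integrableOn_Ioo_rpow_iff hδ] at h5
    linarith
  rw [eq_top_iff]
  calc (⊤ : ENNReal) = ∫⁻ x in Ioo (-δ) 0, ENNReal.ofReal ((C * (-x))⁻¹) := hkey.symm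
    _ ≤ ∫⁻ x in Ioo (-δ) 0, (ENNReal.ofReal |f x|)⁻¹ := by
        apply setLIntegral_mono' measurableSet_Ioo
        intro x hx
        have hpos : 0 < C * (-x) := by
          have : 0 < -x := by linarith [hx.2]
          positivity
        rw [ENNReal.ofReal_inv_of_pos hpos]
        exact ENNReal.inv_le_inv' (ENNReal.ofReal_le_ofReal (hbound x hx))
    _ ≤ ∫⁻ x in Ioo (-1 : ℝ) 0, (ENNReal.ofReal |f x|)⁻¹ :=
        lintegral_mono_set (Ioo_subset_Ioo (by linarith) le_rfl)
end

section
/- Let ε ∈ {−1, 1} and let f : ℝ → ℝ be a continuous function such that −εf is bounded below on [0, ∞). Then the following two conditions are equivalent. (a) For every x₀ ≥ 0 and every real constant C such that C² − εf(x) > 0 for all x ≥ x₀, the Lebesgue integral ∫_{x₀}^{∞} (C² − εf(x))^{−1/2} dx is infinite. (b) Either there exists M > 0 such that the Lebesgue measure of {x ≥ 0 : −εf(x) ≤ M} is infinite, or for every M > 0 the Lebesgue measure of {x ≥ 0 : −εf(x) ≤ M} is finite and there exists α > 0 such that the Lebesgue integral of (−εf(x))^{−1/2} over the set {x ≥ 0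 : −εf(x) ≥ α} is infinite. -/
open MeasureTheory Set
open scoped ENNReal

private lemma sqrt_inv_meas {g : ℝ → ℝ} (hg : Continuous g) :
    Measurable fun x => ENNReal.ofReal (1 / Real.sqrt (g x)) :=
  (measurable_one.div ((Real.continuous_sqrt.comp hg).measurable)).ennreal_ofReal

private lemma CR_general (g : ℝ → ℝ) (hg : Continuous g)
    (hbdd : ∃ m : ℝ, ∀ x ≥ (0 : ℝ), m ≤ g x) :
    (∀ x₀ ≥ (0 : ℝ), ∀ C : ℝ, (∀ x ≥ x₀, 0 < C ^ 2 + g x) →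
      ∫⁻ x in Ici x₀, ENNReal.ofReal (1 / Real.sqrt (C ^ 2 + g x)) = ⊤)
    ↔
    ((∃ M > (0 : ℝ), volume {x : ℝ | 0 ≤ x ∧ g x ≤ M} = ⊤) ∨
      ((∀ M > (0 : ℝ), volume {x : ℝ | 0 ≤ x ∧ g x ≤ M} < ⊤) ∧
        ∃ α > (0 : ℝ),
          ∫⁻ x in {x : ℝ | 0 ≤ x ∧ α ≤ g x},
            ENNReal.ofReal (1 / Real.sqrt (g x)) = ⊤)) := by
  obtain ⟨m, hm⟩ := hbdd
  constructor
  · -- (a) → (b), by contraposition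
    intro ha
    by_contra hb
    push_neg at hb
    obtain ⟨hb1, hb2⟩ := hb
    have hfin : ∀ M > (0 : ℝ), volume {x : ℝ | 0 ≤ x ∧ g x ≤ M} < ⊤ := by
      intro M hM
      exact lt_top_iff_ne_top.2 (hb1 M hM)
    have hb2' := hb2 hfin
    have hI1 : ∫⁻ x in {x : ℝ | 0 ≤ x ∧ (1:ℝ) ≤ g x},
        ENNReal.ofReal (1 / Real.sqrt (g x)) ≠ ⊤ := hb2' 1 one_pos
    set C : ℝ := Real.sqrt (|m| + 1) with hC
    have hC2 : C ^ 2 = |m| + 1 := Real.sq_sqrt (by positivity)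
    have hpos : ∀ x ≥ (0 : ℝ), 0 < C ^ 2 + g x := by
      intro x hx
      have := hm x hx
      have : m ≤ g x := this
      nlinarith [abs_nonneg m, neg_abs_le m]
    have hkey := ha 0 le_rfl C hpos
    have hA : volume {x : ℝ | 0 ≤ x ∧ g x ≤ 1} < ⊤ := hfin 1 one_pos
    set A : Set ℝ := {x : ℝ | 0 ≤ x ∧ g x ≤ 1}
    set B : Set ℝ := {x : ℝ | 0 ≤ x ∧ (1:ℝ) ≤ g x}
    have hmeasA : MeasurableSet A :=
      (measurableSet_Ici.inter (hg.measurable measurableSet_Iic))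
    have hmeasB : MeasurableSet B :=
      (measurableSet_Ici.inter (hg.measurable measurableSet_Ici))
    have hsub : Ici (0:ℝ) ⊆ A ∪ B := by
      intro x hx
      rcases le_total (g x) 1 with h | h
      · exact Or.inl ⟨hx, h⟩
      · exact Or.inr ⟨hx, h⟩
    have hIA : ∫⁻ x in A, ENNReal.ofReal (1 / Real.sqrt (C ^ 2 + g x)) ≠ ⊤ := by
      have hle : ∫⁻ x in A, ENNReal.ofReal (1 / Real.sqrt (C ^ 2 + g x))
          ≤ ∫⁻ _ in A, (1 : ℝ≥0∞) := by
        refine setLIntegral_mono' hmeasA (fun x hx => ?_)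
        have h1 : (1:ℝ) ≤ C ^ 2 + g x := by
          have := hm x hx.1
          nlinarith [abs_nonneg m, neg_abs_le m]
        have : (1:ℝ) ≤ Real.sqrt (C ^ 2 + g x) := by
          rw [show (1:ℝ) = Real.sqrt 1 by simp]
          exact Real.sqrt_le_sqrt h1
        calc ENNReal.ofReal (1 / Real.sqrt (C ^ 2 + g x)) ≤ ENNReal.ofReal 1 := by
              apply ENNReal.ofReal_le_ofReal
              rw [div_le_one (by linarith)]
              exact this
          _ = 1 := ENNReal.ofReal_one
      refine ne_top_of_le_ne_top ?_ hle
      rw [setLIntegral_const]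
      simpa using (lt_top_iff_ne_top.1 hA)
    have hIB : ∫⁻ x in B, ENNReal.ofReal (1 / Real.sqrt (C ^ 2 + g x)) ≠ ⊤ := by
      have hle : ∫⁻ x in B, ENNReal.ofReal (1 / Real.sqrt (C ^ 2 + g x))
          ≤ ∫⁻ x in B, ENNReal.ofReal (1 / Real.sqrt (g x)) := by
        refine setLIntegral_mono' hmeasB (fun x hx => ?_)
        apply ENNReal.ofReal_le_ofReal
        have hgx : (0:ℝ) < g x := lt_of_lt_of_le one_pos hx.2
        have h1 : Real.sqrt (g x) ≤ Real.sqrt (C ^ 2 + g x) :=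
          Real.sqrt_le_sqrt (le_add_of_nonneg_left (sq_nonneg C))
        exact one_div_le_one_div_of_le (Real.sqrt_pos.2 hgx) h1
      exact ne_top_of_le_ne_top hI1 hle
    have : ∫⁻ x in Ici (0:ℝ), ENNReal.ofReal (1 / Real.sqrt (C ^ 2 + g x)) ≠ ⊤ := by
      refine ne_top_of_le_ne_top ?_
        ((lintegral_mono_set hsub).trans
          (lintegral_union_le _ A B))
      exact ENNReal.add_ne_top.2 ⟨hIA, hIB⟩
    exact this hkey
  · -- (b) → (a)
    rintro (⟨M, hM, hMinf⟩ | ⟨hfin, α, hα, hαinf⟩) x₀ hx₀ C hpos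
    · -- infinite sublevel set
      set S : Set ℝ := {x : ℝ | x₀ ≤ x ∧ g x ≤ M}
      have hSsub : {x : ℝ | 0 ≤ x ∧ g x ≤ M} ⊆ Icc 0 x₀ ∪ S := by
        intro x hx
        rcases le_total x x₀ with h | h
        · exact Or.inl ⟨hx.1, h⟩
        · exact Or.inr ⟨h, hx.2⟩
      have hSinf : volume S = ⊤ := by
        by_contra h
        have : volume {x : ℝ | 0 ≤ x ∧ g x ≤ M} ≤ volume (Icc 0 x₀) + volume S :=
          (measure_mono hSsub).trans (measure_union_le _ _)
        rw [hMinf] at this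
        exact absurd (eq_top_iff.2 this)
          (ENNReal.add_ne_top.2 ⟨by simp [Real.volume_Icc], h⟩)
      have hSIci : S ⊆ Ici x₀ := fun x hx => hx.1
      set c : ℝ := 1 / Real.sqrt (C ^ 2 + M) with hc
      have hcpos : 0 < c := by
        have h0 : 0 < C ^ 2 + M := by nlinarith [sq_nonneg C]
        rw [hc]
        exact one_div_pos.2 (Real.sqrt_pos.2 h0)
      have hlow : ∫⁻ _ in S, ENNReal.ofReal c
          ≤ ∫⁻ x in S, ENNReal.ofReal (1 / Real.sqrt (C ^ 2 + g x)) := by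
        refine setLIntegral_mono (sqrt_inv_meas (continuous_const.add hg)) (fun x hx => ?_)
        apply ENNReal.ofReal_le_ofReal
        have hx1 : 0 < C ^ 2 + g x := hpos x hx.1
        have h1 : Real.sqrt (C ^ 2 + g x) ≤ Real.sqrt (C ^ 2 + M) :=
          Real.sqrt_le_sqrt (by linarith [hx.2])
        exact one_div_le_one_div_of_le (Real.sqrt_pos.2 hx1) h1
      have : (⊤ : ℝ≥0∞) ≤ ∫⁻ x in Ici x₀, ENNReal.ofReal (1 / Real.sqrt (C ^ 2 + g x)) := by
        calc (⊤ : ℝ≥0∞) = ENNReal.ofReal c * volume S := by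
              rw [hSinf, ENNReal.mul_top (ENNReal.ofReal_pos.2 hcpos).ne']
          _ = ∫⁻ _ in S, ENNReal.ofReal c := (setLIntegral_const _ _).symm
          _ ≤ ∫⁻ x in S, ENNReal.ofReal (1 / Real.sqrt (C ^ 2 + g x)) := hlow
          _ ≤ _ := lintegral_mono_set hSIci
      exact top_le_iff.1 this
    · -- divergence on superlevel set
      set T : Set ℝ := {x : ℝ | 0 ≤ x ∧ α ≤ g x}
      set S : Set ℝ := {x : ℝ | x₀ ≤ x ∧ α ≤ g x}
      have hSIci : S ⊆ Ici x₀ := fun x hx => hx.1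
      have hTsub : T ⊆ (T ∩ Icc 0 x₀) ∪ S := by
        intro x hx
        rcases le_total x x₀ with h | h
        · exact Or.inl ⟨hx, hx.1, h⟩
        · exact Or.inr ⟨h, hx.2⟩
      -- the integral over T ∩ Icc 0 x₀ is finite
      have hfinpart : ∫⁻ x in T ∩ Icc 0 x₀,
          ENNReal.ofReal (1 / Real.sqrt (g x)) ≠ ⊤ := by
        have hmeas : MeasurableSet (T ∩ Icc 0 x₀) :=
          ((measurableSet_Ici.inter (hg.measurable measurableSet_Ici)).inter
            measurableSet_Icc)
        have hle : ∫⁻ x in T ∩ Icc 0 x₀, ENNReal.ofReal (1 / Real.sqrt (g x))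
            ≤ ∫⁻ _ in T ∩ Icc 0 x₀, ENNReal.ofReal (1 / Real.sqrt α) := by
          refine setLIntegral_mono' hmeas (fun x hx => ?_)
          apply ENNReal.ofReal_le_ofReal
          exact one_div_le_one_div_of_le (Real.sqrt_pos.2 hα)
            (Real.sqrt_le_sqrt hx.1.2)
        refine ne_top_of_le_ne_top ?_ hle
        rw [setLIntegral_const]
        refine ENNReal.mul_ne_top ENNReal.ofReal_ne_top ?_
        have : volume (T ∩ Icc 0 x₀) ≤ volume (Icc (0:ℝ) x₀) :=
          measure_mono inter_subset_right
        refine ne_top_of_le_ne_top ?_ this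
        simp [Real.volume_Icc]
      have hSinf : ∫⁻ x in S, ENNReal.ofReal (1 / Real.sqrt (g x)) = ⊤ := by
        by_contra h
        have : ∫⁻ x in T, ENNReal.ofReal (1 / Real.sqrt (g x))
            ≤ (∫⁻ x in T ∩ Icc 0 x₀, ENNReal.ofReal (1 / Real.sqrt (g x)))
              + ∫⁻ x in S, ENNReal.ofReal (1 / Real.sqrt (g x)) :=
          (lintegral_mono_set hTsub).trans (lintegral_union_le _ _ _)
        rw [hαinf] at this
        exact absurd (eq_top_iff.2 this) (ENNReal.add_ne_top.2 ⟨hfinpart, h⟩)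
      set K : ℝ := C ^ 2 / α + 1 with hK
      have hKpos : (0:ℝ) < K := by positivity
      set c : ℝ := 1 / Real.sqrt K with hc
      have hcpos : (0:ℝ) < c := by positivity
      have hlow : ∀ x ∈ S, ENNReal.ofReal c * ENNReal.ofReal (1 / Real.sqrt (g x))
          ≤ ENNReal.ofReal (1 / Real.sqrt (C ^ 2 + g x)) := by
        intro x hx
        rw [← ENNReal.ofReal_mul hcpos.le]
        apply ENNReal.ofReal_le_ofReal
        have hgx : (0:ℝ) < g x := lt_of_lt_of_le hα hx.2
        have h1 : C ^ 2 + g x ≤ K * g x := by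
          have h2 : C ^ 2 ≤ C ^ 2 / α * g x := by
            rw [div_mul_eq_mul_div, le_div_iff₀ hα]
            have : C ^ 2 * α ≤ C ^ 2 * g x :=
              mul_le_mul_of_nonneg_left hx.2 (sq_nonneg C)
            linarith
          calc C ^ 2 + g x ≤ C ^ 2 / α * g x + g x := by linarith
            _ = K * g x := by rw [hK]; ring
        have h3 : Real.sqrt (C ^ 2 + g x) ≤ Real.sqrt K * Real.sqrt (g x) := by
          rw [← Real.sqrt_mul hKpos.le]
          exact Real.sqrt_le_sqrt h1
        rw [hc, div_mul_div_comm, one_mul]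
        refine one_div_le_one_div_of_le ?_ h3
        exact Real.sqrt_pos.2 (hpos x hx.1)
      have : (⊤ : ℝ≥0∞) ≤ ∫⁻ x in Ici x₀, ENNReal.ofReal (1 / Real.sqrt (C ^ 2 + g x)) := by
        calc (⊤ : ℝ≥0∞) = ENNReal.ofReal c * ∫⁻ x in S, ENNReal.ofReal (1 / Real.sqrt (g x)) := by
              rw [hSinf, ENNReal.mul_top (ENNReal.ofReal_pos.2 hcpos).ne']
          _ = ∫⁻ x in S, ENNReal.ofReal c * ENNReal.ofReal (1 / Real.sqrt (g x)) :=
              (lintegral_const_mul' _ _ ENNReal.ofReal_ne_top).symm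
          _ ≤ ∫⁻ x in S, ENNReal.ofReal (1 / Real.sqrt (C ^ 2 + g x)) := by
              exact setLIntegral_mono (sqrt_inv_meas (continuous_const.add hg)) hlow
          _ ≤ _ := lintegral_mono_set hSIci
      exact top_le_iff.1 this

/-- The (CR) condition of the "completeness in a ribbon" lemma: for a continuous `f` with
`-ε f` bounded below on `[0, ∞)`, all the crossing-time integrals
`∫_{x₀}^∞ (C² - ε f(x))^{-1/2} dx` diverge iff either some sublevel set `{-ε f ≤ M}` has
infinite measure, or all sublevel sets have finite measure and
`∫ (-ε f)^{-1/2}` diverges on some superlevel set `{-ε f ≥ α}`. -/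
theorem completeness_in_ribbon_CR_condition
    (ε : ℝ) (hε : ε = -1 ∨ ε = 1) (f : ℝ → ℝ) (hf : Continuous f)
    (hbdd : ∃ m : ℝ, ∀ x ≥ (0 : ℝ), m ≤ -ε * f x) :
    (∀ x₀ ≥ (0 : ℝ), ∀ C : ℝ, (∀ x ≥ x₀, 0 < C ^ 2 - ε * f x) →
      ∫⁻ x in Ici x₀, ENNReal.ofReal (1 / Real.sqrt (C ^ 2 - ε * f x)) = ⊤)
    ↔
    ((∃ M > (0 : ℝ), volume {x : ℝ | 0 ≤ x ∧ -ε * f x ≤ M} = ⊤) ∨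
      ((∀ M > (0 : ℝ), volume {x : ℝ | 0 ≤ x ∧ -ε * f x ≤ M} < ⊤) ∧
        ∃ α > (0 : ℝ),
          ∫⁻ x in {x : ℝ | 0 ≤ x ∧ α ≤ -ε * f x},
            ENNReal.ofReal (1 / Real.sqrt (-ε * f x)) = ⊤)) := by
  have key := CR_general (fun x => -ε * f x) (by continuity) hbdd
  simp only [show ∀ (C x : ℝ), C ^ 2 + -ε * f x = C ^ 2 - ε * f x from
    fun C x => by ring] at key
  exact key
end

section
/- Let ε ∈ {−1, 1}, let f : ℝ → ℝ be measurable, and let x₀ ∈ ℝ be such that s := sup_{x ≥ x₀} εf(x) is finite. Suppose that for every M > 0 the Lebesgue measure of {x ≥ x₀ : −εf(x) ≤ M} is finite, and that for every α > 0 the Lebesgue integral of (−εf(x))^{−1/2} over {x ≥ x₀ : −εf(x) ≥ α} is finite. Then for every C ∈ ℝ with C² > s, the Lebesgue integral ∫_{x₀}^{∞} (C² − εf(x))^{−1/2} dx is finite. -/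
open MeasureTheory Set

/-- Incompleteness direction of the "completeness in a ribbon" lemma: if all sublevel sets
`{-ε f ≤ M}` have finite measure and all integrals of `(-ε f)^{-1/2}` over superlevel sets
`{-ε f ≥ α}` are finite, then for every `C` with `C² > sup_{x ≥ x₀} ε f`, the crossing time
`∫_{x₀}^∞ (C² - ε f)^{-1/2}` is finite. -/
theorem lintegral_lt_top_of_CR_fails
    (ε : ℝ) (hε : ε = -1 ∨ ε = 1) (f : ℝ → ℝ) (hf : Measurable f)
    (x₀ s : ℝ) (hs : IsLUB ((fun x => ε * f x) '' Ici x₀) s)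
    (hfin : ∀ M > (0 : ℝ), volume {x : ℝ | x₀ ≤ x ∧ -ε * f x ≤ M} < ⊤)
    (hint : ∀ α > (0 : ℝ),
      ∫⁻ x in {x : ℝ | x₀ ≤ x ∧ α ≤ -ε * f x},
        ENNReal.ofReal (1 / Real.sqrt (-ε * f x)) < ⊤) :
    ∀ C : ℝ, s < C ^ 2 →
      ∫⁻ x in Ici x₀, ENNReal.ofReal (1 / Real.sqrt (C ^ 2 - ε * f x)) < ⊤ := by
  intro C hC
  set g : ℝ → ENNReal := fun x => ENNReal.ofReal (1 / Real.sqrt (C ^ 2 - ε * f x)) with hg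
  set A : Set ℝ := {x : ℝ | x₀ ≤ x ∧ -ε * f x ≤ 1} with hA
  set B : Set ℝ := {x : ℝ | x₀ ≤ x ∧ 1 ≤ -ε * f x} with hB
  have hδ : 0 < C ^ 2 - s := by linarith
  have hmA : MeasurableSet A := by
    have : A = Ici x₀ ∩ {x | -ε * f x ≤ 1} := rfl
    rw [this]
    exact measurableSet_Ici.inter
      (measurableSet_le (measurable_const.mul hf) measurable_const)
  have hmB : MeasurableSet B := by
    have : B = Ici x₀ ∩ {x | 1 ≤ -ε * f x} := rfl
    rw [this]
    exact measurableSet_Ici.inter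
      (measurableSet_le measurable_const (measurable_const.mul hf))
  have hcover : Ici x₀ ⊆ A ∪ B := by
    intro x hx
    rcases le_total (-ε * f x) 1 with h | h
    · exact Or.inl ⟨hx, h⟩
    · exact Or.inr ⟨hx, h⟩
  have hAfin : ∫⁻ x in A, g x < ⊤ := by
    have hbound : ∀ x ∈ A, g x ≤ ENNReal.ofReal (1 / Real.sqrt (C ^ 2 - s)) := by
      intro x hx
      have hxs : ε * f x ≤ s := hs.1 ⟨x, hx.1, rfl⟩
      have h1 : C ^ 2 - s ≤ C ^ 2 - ε * f x := by linarith
      have h2 : 0 < Real.sqrt (C ^ 2 - s) := Real.sqrt_pos.mpr hδ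
      have h3 : Real.sqrt (C ^ 2 - s) ≤ Real.sqrt (C ^ 2 - ε * f x) :=
        Real.sqrt_le_sqrt h1
      exact ENNReal.ofReal_le_ofReal (one_div_le_one_div_of_le h2 h3)
    calc ∫⁻ x in A, g x
        ≤ ∫⁻ _ in A, ENNReal.ofReal (1 / Real.sqrt (C ^ 2 - s)) :=
          setLIntegral_mono' hmA hbound
      _ = ENNReal.ofReal (1 / Real.sqrt (C ^ 2 - s)) * volume A := by
          rw [setLIntegral_const]
      _ < ⊤ := ENNReal.mul_lt_top ENNReal.ofReal_lt_top (hfin 1 one_pos)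
  have hBfin : ∫⁻ x in B, g x < ⊤ := by
    have hbound : ∀ x ∈ B, g x ≤ ENNReal.ofReal (1 / Real.sqrt (-ε * f x)) := by
      intro x hx
      have h1 : (1 : ℝ) ≤ -ε * f x := hx.2
      have h2 : 0 < Real.sqrt (-ε * f x) := Real.sqrt_pos.mpr (by linarith)
      have h3 : -ε * f x ≤ C ^ 2 - ε * f x := by nlinarith [sq_nonneg C]
      have h4 : Real.sqrt (-ε * f x) ≤ Real.sqrt (C ^ 2 - ε * f x) :=
        Real.sqrt_le_sqrt h3
      exact ENNReal.ofReal_le_ofReal (one_div_le_one_div_of_le h2 h4)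
    exact lt_of_le_of_lt (setLIntegral_mono' hmB hbound) (hint 1 one_pos)
  calc ∫⁻ x in Ici x₀, g x
      ≤ ∫⁻ x in A ∪ B, g x := lintegral_mono_set hcover
    _ ≤ (∫⁻ x in A, g x) + ∫⁻ x in B, g x := lintegral_union_le _ _ _
    _ < ⊤ := ENNReal.add_lt_top.mpr ⟨hAfin, hBfin⟩
end

section
/- Let x₀ ∈ ℝ, N ≥ 0, and let g : ℝ → ℝ be twice differentiable on [x₀, ∞) with |g''(x)| ≤ N and g(x) > 0 for all x ≥ x₀. Then the Lebesgue integral ∫_{x₀}^{∞} g(x)^{−1/2} dx is infinite. -/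
open MeasureTheory Set

/-- Bounded curvature step: if `g` is twice differentiable on `[x₀, ∞)` with `|g''| ≤ N`
and `g > 0` there, then `∫_{x₀}^∞ g^{-1/2}` is infinite. -/
theorem lintegral_inv_sqrt_eq_top_of_bounded_second_deriv
    (x₀ N : ℝ) (hN : 0 ≤ N) (g g' g'' : ℝ → ℝ)
    (hg' : ∀ x ≥ x₀, HasDerivWithinAt g (g' x) (Ici x₀) x)
    (hg'' : ∀ x ≥ x₀, HasDerivWithinAt g' (g'' x) (Ici x₀) x)
    (hbound : ∀ x ≥ x₀, |g'' x| ≤ N)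
    (hpos : ∀ x ≥ x₀, 0 < g x) :
    ∫⁻ x in Ici x₀, ENNReal.ofReal (1 / Real.sqrt (g x)) = ⊤ := by
  -- Step 1: quadratic upper bound on g
  set C : ℝ := g x₀ + |g' x₀| + N/2 + 1 with hCdef
  have hCpos : 0 < C := by
    have := hpos x₀ le_rfl
    have := abs_nonneg (g' x₀)
    simp only [hCdef]; linarith
  have hquad : ∀ x ≥ x₀, g x ≤ C * (x - x₀ + 1)^2 := by
    set φ : ℝ → ℝ := fun x => g x₀ + g' x₀ * (x - x₀) + N/2*(x - x₀)^2 - g x with hφ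
    set φ' : ℝ → ℝ := fun x => g' x₀ + N*(x - x₀) - g' x with hφ'
    have hdφ : ∀ x ≥ x₀, HasDerivWithinAt φ (φ' x) (Ici x₀) x := by
      intro x hx
      have h1 : HasDerivWithinAt (fun x => g x₀ + g' x₀ * (x - x₀) + N/2*(x - x₀)^2)
          (g' x₀ + N*(x - x₀)) (Ici x₀) x := by
        have : HasDerivWithinAt (fun x : ℝ => g x₀ + g' x₀ * (x - x₀) + N/2*(x - x₀)^2)
            (0 + g' x₀ * 1 + N/2*(2*(x - x₀)*1)) (Ici x₀) x := by
          apply HasDerivWithinAt.add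
          apply HasDerivWithinAt.add
          · exact hasDerivWithinAt_const _ _ _
          · exact ((hasDerivWithinAt_id x _).sub_const x₀).const_mul _
          · exact (((hasDerivWithinAt_id x _).sub_const x₀).pow 2).const_mul _
              |>.congr_deriv (by simp [id])
        convert this using 1; ring
      exact h1.sub (hg' x hx)
    have hdφ' : ∀ x ≥ x₀, HasDerivWithinAt φ' (N - g'' x) (Ici x₀) x := by
      intro x hx
      have h1 : HasDerivWithinAt (fun x => g' x₀ + N*(x - x₀)) N (Ici x₀) x := by
        have := (((hasDerivWithinAt_id x (Ici x₀)).sub_const x₀).const_mul N).const_add (g' x₀)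
        simpa using this
      exact h1.sub (hg'' x hx)
    have hmono' : MonotoneOn φ' (Ici x₀) := by
      apply monotoneOn_of_hasDerivWithinAt_nonneg (convex_Ici x₀)
        (fun x hx => (hdφ' x hx).continuousWithinAt)
        (fun x hx => (hdφ' x (le_of_lt (by simpa [interior_Ici] using hx))).mono
          (by rw [interior_Ici]; exact Ioi_subset_Ici_self))
      intro x hx
      rw [interior_Ici] at hx
      have := abs_le.1 (hbound x hx.le)
      linarith [this.2]
    have hφ'0 : φ' x₀ = 0 := by simp [hφ']
    have hφ'nonneg : ∀ x ≥ x₀, 0 ≤ φ' x := fun x hx => by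
      rw [← hφ'0]; exact hmono' self_mem_Ici hx hx
    have hmono : MonotoneOn φ (Ici x₀) := by
      apply monotoneOn_of_hasDerivWithinAt_nonneg (convex_Ici x₀)
        (fun x hx => (hdφ x hx).continuousWithinAt)
        (fun x hx => (hdφ x (le_of_lt (by simpa [interior_Ici] using hx))).mono
          (by rw [interior_Ici]; exact Ioi_subset_Ici_self))
      intro x hx
      rw [interior_Ici] at hx
      exact hφ'nonneg x hx.le
    have hφ0 : φ x₀ = 0 := by simp [hφ]
    intro x hx
    have h1 : 0 ≤ φ x := by rw [← hφ0]; exact hmono self_mem_Ici hx hx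
    have h2 : g x ≤ g x₀ + g' x₀ * (x - x₀) + N/2*(x - x₀)^2 := by
      simp only [hφ] at h1; linarith
    have ht : 0 ≤ x - x₀ := by linarith
    have habs : g' x₀ * (x - x₀) ≤ |g' x₀| * (x - x₀) :=
      mul_le_mul_of_nonneg_right (le_abs_self _) ht
    have h0 : 0 < g x₀ := hpos x₀ le_rfl
    rw [hCdef]
    nlinarith [abs_nonneg (g' x₀), sq_nonneg (x - x₀)]
  -- Step 2: comparison function
  have hsC : 0 < Real.sqrt C := Real.sqrt_pos.2 hCpos
  set c : ℝ := (Real.sqrt C)⁻¹ with hcdef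
  have hc : 0 < c := inv_pos.2 hsC
  set f : ℝ → ℝ := fun x => c * (x - x₀ + 1)⁻¹ with hfdef
  have hfmeas : Measurable f :=
    measurable_const.mul ((measurable_id.sub_const x₀).add_const 1).inv
  have hfle : ∀ x ≥ x₀, f x ≤ 1 / Real.sqrt (g x) := by
    intro x hx
    have hu : 0 < x - x₀ + 1 := by linarith
    have hgx : 0 < g x := hpos x hx
    have hsg : 0 < Real.sqrt (g x) := Real.sqrt_pos.2 hgx
    have hle : Real.sqrt (g x) ≤ Real.sqrt C * (x - x₀ + 1) := by
      have := Real.sqrt_le_sqrt (hquad x hx)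
      rwa [Real.sqrt_mul hCpos.le, Real.sqrt_sq hu.le] at this
    have := inv_anti₀ hsg hle
    rw [mul_inv] at this
    simpa [hfdef, hcdef, one_div] using this
  -- reduce to the comparison function
  have hmono_int : ∫⁻ x in Ici x₀, ENNReal.ofReal (f x)
      ≤ ∫⁻ x in Ici x₀, ENNReal.ofReal (1 / Real.sqrt (g x)) := by
    apply lintegral_mono_ae
    filter_upwards [ae_restrict_mem measurableSet_Ici] with x hx
    exact ENNReal.ofReal_le_ofReal (hfle x hx)
  rw [eq_top_iff]
  refine le_trans (le_of_eq ?_) hmono_int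
  -- Step 3: the comparison lintegral is infinite
  by_contra hT
  have hT' : ∫⁻ x in Ici x₀, ENNReal.ofReal (f x) < ⊤ := lt_top_iff_ne_top.2 fun h => hT h.symm
  have hfnn : 0 ≤ᵐ[volume.restrict (Ici x₀)] f := by
    filter_upwards [ae_restrict_mem measurableSet_Ici] with x hx
    have : 0 < x - x₀ + 1 := by simp only [mem_Ici] at hx; linarith
    positivity
  have hInt : IntegrableOn f (Ici x₀) := by
    refine ⟨hfmeas.aestronglyMeasurable, ?_⟩
    rwa [hasFiniteIntegral_iff_ofReal hfnn]
  set t : ℝ := |x₀| + 1 with htdef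
  have ht0 : 0 < t := by positivity
  have htx₀ : x₀ ≤ t := by
    have := le_abs_self x₀; simp only [htdef]; linarith
  have hInt2 : IntegrableOn f (Ioi t) :=
    hInt.mono (fun x hx => le_trans htx₀ (le_of_lt hx)) le_rfl
  have hIntInv : IntegrableOn (fun x : ℝ => x ^ (-1 : ℝ)) (Ioi t) := by
    apply Integrable.mono' (hInt2.const_mul (2/c))
    · exact (measurable_id.pow_const (-1 : ℝ)).aestronglyMeasurable
    · filter_upwards [ae_restrict_mem measurableSet_Ioi] with x hx
      simp only [mem_Ioi] at hx
      have hx0 : 0 < x := lt_trans ht0 hx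
      have h2x : x - x₀ + 1 ≤ 2 * x := by
        have h1 : |x₀| + 1 ≤ x := hx.le
        have h2 : -x₀ ≤ |x₀| := neg_le_abs x₀
        linarith
      have hu : 0 < x - x₀ + 1 := by nlinarith
      have hinv : (2 * x)⁻¹ ≤ (x - x₀ + 1)⁻¹ := inv_anti₀ hu h2x
      have hnorm : ‖x ^ (-1 : ℝ)‖ = x⁻¹ := by
        rw [Real.rpow_neg_one, Real.norm_eq_abs, abs_of_pos (inv_pos.2 hx0)]
      rw [hnorm]
      have : x⁻¹ = 2 * (2 * x)⁻¹ := by field_simp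
      rw [this, hfdef]
      calc 2 * (2*x)⁻¹ ≤ 2 * (x - x₀ + 1)⁻¹ := by linarith
        _ = 2/c * (c * (x - x₀ + 1)⁻¹) := by field_simp
  rw [integrableOn_Ioi_rpow_iff ht0] at hIntInv
  linarith
end

section
/- Let a < b be real numbers, N > 0, and let g : ℝ → ℝ be twice differentiable on [a, b] with g(a) = g(b) = 0, g(x) > 0 for all x ∈ (a, b), and |g''(x)| ≤ N for all x ∈ [a, b]. Then the Lebesgue integral ∫_{a}^{b} g(x)^{−1/2} dx is at least 1/√N. -/
/-!
Set `φ x = g x - N/2 · (x - a)(b - x)`. Since `φ'' = g'' + N ≥ 0`, `φ` is convex, and it is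
nonpositive at `a` and `b`, hence on all of `[a, b]`. So `0 < g ≤ N (b - a)²` on `(a, b)`, and the
integrand is at least `1 / ((b - a) √N)` on a set of length `b - a`.
-/

open MeasureTheory Set

theorem le_mul_sub_mul_sub_of_neg_le_deriv2 {a b N : ℝ} {g g' g'' : ℝ → ℝ}
    (hg : ContinuousOn g (Icc a b)) (hg' : ∀ x ∈ Ioo a b, HasDerivAt g (g' x) x)
    (hg'' : ∀ x ∈ Ioo a b, HasDerivAt g' (g'' x) x) (ha : g a ≤ 0) (hb : g b ≤ 0)
    (hN : ∀ x ∈ Ioo a b, -N ≤ g'' x) {x : ℝ} (hx : x ∈ Icc a b) :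
    g x ≤ N / 2 * ((x - a) * (b - x)) := by
  have hq' (y : ℝ) : HasDerivAt (fun y ↦ N / 2 * ((y - a) * (b - y)))
      (N / 2 * ((b - y) - (y - a))) y :=
    ((((hasDerivAt_id' y).sub_const a).mul ((hasDerivAt_id' y).const_sub b)).const_mul
      (N / 2)).congr_deriv (by ring)
  have hq'' (y : ℝ) : HasDerivAt (fun y ↦ N / 2 * ((b - y) - (y - a))) (-N) y :=
    ((((hasDerivAt_id' y).const_sub b).sub ((hasDerivAt_id' y).sub_const a)).const_mul
      (N / 2)).congr_deriv (by ring)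
  have hconvex : ConvexOn ℝ (Icc a b) fun y ↦ g y - N / 2 * ((y - a) * (b - y)) := by
    refine convexOn_of_hasDerivWithinAt2_nonneg (convex_Icc a b)
      (hg.sub (by fun_prop)) (fun y hy ↦ ?_) (fun y hy ↦ ?_) (fun y hy ↦ ?_)
      (f' := fun y ↦ g' y - N / 2 * ((b - y) - (y - a))) (f'' := fun y ↦ g'' y - -N)
    all_goals simp only [interior_Icc] at hy ⊢
    · exact ((hg' y hy).sub (hq' y)).hasDerivWithinAt
    · exact ((hg'' y hy).sub (hq'' y)).hasDerivWithinAt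
    · linarith [hN y hy]
  have hmax := hconvex.le_max_of_mem_Icc (left_mem_Icc.2 (hx.1.trans hx.2))
    (right_mem_Icc.2 (hx.1.trans hx.2)) hx
  simp only [sub_self, zero_mul, mul_zero, sub_zero] at hmax
  linarith [max_le ha hb]

theorem mul_ofReal_sub_le_setLIntegral_Icc {a b : ℝ} {f : ℝ → ENNReal} {c : ENNReal}
    (hf : ∀ x ∈ Ioo a b, c ≤ f x) : c * ENNReal.ofReal (b - a) ≤ ∫⁻ x in Icc a b, f x :=
  calc c * ENNReal.ofReal (b - a) = ∫⁻ _ in Ioo a b, c := by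
        rw [setLIntegral_const, Real.volume_Ioo]
    _ ≤ ∫⁻ x in Ioo a b, f x := setLIntegral_mono' measurableSet_Ioo hf
    _ ≤ ∫⁻ x in Icc a b, f x := lintegral_mono_set Ioo_subset_Icc_self

/-- Bounded curvature step: the crossing time of a band, between two consecutive zeros of
`g` with `|g''| ≤ N`, is bounded below by `1/√N`. -/
theorem lintegral_inv_sqrt_ge_of_bounded_second_deriv
    (a b N : ℝ) (hab : a < b) (hN : 0 < N) (g g' g'' : ℝ → ℝ)
    (hg' : ∀ x ∈ Icc a b, HasDerivWithinAt g (g' x) (Icc a b) x)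
    (hg'' : ∀ x ∈ Icc a b, HasDerivWithinAt g' (g'' x) (Icc a b) x)
    (ha : g a = 0) (hb : g b = 0)
    (hpos : ∀ x ∈ Ioo a b, 0 < g x)
    (hbound : ∀ x ∈ Icc a b, |g'' x| ≤ N) :
    ENNReal.ofReal (1 / Real.sqrt N) ≤
      ∫⁻ x in Icc a b, ENNReal.ofReal (1 / Real.sqrt (g x)) := by
  have hderiv {f f' : ℝ → ℝ} (hf : ∀ x ∈ Icc a b, HasDerivWithinAt f (f' x) (Icc a b) x)
      (x : ℝ) (hx : x ∈ Ioo a b) : HasDerivAt f (f' x) x :=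
    (hf x (Ioo_subset_Icc_self hx)).hasDerivAt (Icc_mem_nhds hx.1 hx.2)
  have hupper (x : ℝ) (hx : x ∈ Ioo a b) : g x ≤ N * (b - a) ^ 2 := by
    have hquad := le_mul_sub_mul_sub_of_neg_le_deriv2
      (fun y hy ↦ (hg' y hy).continuousWithinAt) (hderiv hg') (hderiv hg'') ha.le hb.le
      (fun y hy ↦ neg_le_of_abs_le (hbound y (Ioo_subset_Icc_self hy))) (Ioo_subset_Icc_self hx)
    have hprod : (x - a) * (b - x) ≤ (b - a) ^ 2 := by
      rw [sq]
      exact mul_le_mul (by linarith [hx.2]) (by linarith [hx.1]) (by linarith [hx.2])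
        (by linarith [hx.1, hx.2])
    nlinarith [mul_le_mul_of_nonneg_left hprod hN.le, sq_nonneg (b - a)]
  have hsqrt : Real.sqrt (N * (b - a) ^ 2) = Real.sqrt N * (b - a) := by
    rw [Real.sqrt_mul hN.le, Real.sqrt_sq (sub_pos.2 hab).le]
  calc ENNReal.ofReal (1 / Real.sqrt N)
      = ENNReal.ofReal (1 / Real.sqrt (N * (b - a) ^ 2)) * ENNReal.ofReal (b - a) := by
        rw [← ENNReal.ofReal_mul (by positivity), hsqrt]
        field_simp [(sub_pos.2 hab).ne']
    _ ≤ ∫⁻ x in Icc a b, ENNReal.ofReal (1 / Real.sqrt (g x)) :=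
        mul_ofReal_sub_le_setLIntegral_Icc fun x hx ↦ ENNReal.ofReal_le_ofReal <|
          one_div_le_one_div_of_le (Real.sqrt_pos.2 (hpos x hx)) (Real.sqrt_le_sqrt (hupper x hx))
end

section
/- Let a < b be real numbers, N > 0, and let g : ℝ → ℝ be differentiable on [a, b] with g(a) = 0, g(x) > 0 for all x ∈ (a, b], and |g'(x)| ≤ N for all x ∈ [a, b]. Then the Lebesgue integral ∫_{a}^{b} g(x)^{−1/2} dx is at least √(b − a)/√N. -/
open MeasureTheory Set

/-- Bounded derivative step: the time to cross a band of length `b - a` is at least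
`√(b-a)/√N` when `g(a) = 0`, `g > 0` on `(a, b]` and `|g'| ≤ N` on `[a, b]`. -/
theorem lintegral_inv_sqrt_ge_of_bounded_deriv
    (a b N : ℝ) (hab : a < b) (hN : 0 < N) (g g' : ℝ → ℝ)
    (hg' : ∀ x ∈ Icc a b, HasDerivWithinAt g (g' x) (Icc a b) x)
    (ha : g a = 0)
    (hpos : ∀ x ∈ Ioc a b, 0 < g x)
    (hbound : ∀ x ∈ Icc a b, |g' x| ≤ N) :
    ENNReal.ofReal (Real.sqrt (b - a) / Real.sqrt N) ≤
      ∫⁻ x in Icc a b, ENNReal.ofReal (1 / Real.sqrt (g x)) := by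
  have hba : (0:ℝ) < b - a := sub_pos.2 hab
  have hgb : ∀ x ∈ Icc a b, g x ≤ N * (b - a) := by
    intro x hx
    have h := (convex_Icc a b).norm_image_sub_le_of_norm_hasDerivWithin_le hg'
      (fun y hy => by simpa [Real.norm_eq_abs] using hbound y hy)
      (left_mem_Icc.2 hab.le) hx
    rw [ha, sub_zero, Real.norm_eq_abs, Real.norm_eq_abs,
      abs_of_nonneg (sub_nonneg.2 hx.1)] at h
    have := le_abs_self (g x)
    nlinarith [hx.2]
  set c := Real.sqrt (N * (b - a)) with hc_def
  have hc : 0 < c := Real.sqrt_pos.2 (by positivity)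
  have key : ∀ x ∈ Ioc a b,
      ENNReal.ofReal (1 / c) ≤ ENNReal.ofReal (1 / Real.sqrt (g x)) := by
    intro x hx
    apply ENNReal.ofReal_le_ofReal
    exact one_div_le_one_div_of_le (Real.sqrt_pos.2 (hpos x hx))
      (Real.sqrt_le_sqrt (hgb x (Ioc_subset_Icc_self hx)))
  calc ENNReal.ofReal (Real.sqrt (b - a) / Real.sqrt N)
      = ENNReal.ofReal (1 / c) * volume (Ioc a b) := by
        rw [Real.volume_Ioc, ← ENNReal.ofReal_mul (by positivity)]
        congr 1
        rw [hc_def, Real.sqrt_mul hN.le]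
        have hsb : Real.sqrt (b - a) * Real.sqrt (b - a) = b - a :=
          Real.mul_self_sqrt hba.le
        have h1 : Real.sqrt (b - a) > 0 := Real.sqrt_pos.2 hba
        have h2 : Real.sqrt N > 0 := Real.sqrt_pos.2 hN
        field_simp
        nlinarith
    _ ≤ ∫⁻ x in Ioc a b, ENNReal.ofReal (1 / Real.sqrt (g x)) := by
        rw [← setLIntegral_const]
        exact setLIntegral_mono' measurableSet_Ioc key
    _ ≤ ∫⁻ x in Icc a b, ENNReal.ofReal (1 / Real.sqrt (g x)) :=
        lintegral_mono_set Ioc_subset_Icc_self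
end

section
/- Let a < b be real numbers, m > 0, and let g : ℝ → ℝ be differentiable on [a, b] with g(b) = 0, g(x) > 0 for all x ∈ [a, b), and |g'(x)| ≥ m for all x ∈ [a, b]. Then the Lebesgue integral ∫_{a}^{b} g(x)^{−1/2} dx is at most 2√(b − a)/√m. -/
open MeasureTheory Set

/-- Mean value theorem estimate: if `g(b) = 0`, `g > 0` on `[a, b)` and `|g'| ≥ m > 0`
on `[a, b]`, then `∫_a^b g^{-1/2} ≤ 2√(b-a)/√m`. -/
theorem lintegral_inv_sqrt_le_of_deriv_bounded_below
    (a b m : ℝ) (hab : a < b) (hm : 0 < m) (g g' : ℝ → ℝ)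
    (hg' : ∀ x ∈ Icc a b, HasDerivWithinAt g (g' x) (Icc a b) x)
    (hb : g b = 0)
    (hpos : ∀ x ∈ Ico a b, 0 < g x)
    (hbound : ∀ x ∈ Icc a b, m ≤ |g' x|) :
    ∫⁻ x in Icc a b, ENNReal.ofReal (1 / Real.sqrt (g x)) ≤
      ENNReal.ofReal (2 * Real.sqrt (b - a) / Real.sqrt m) := by
  set f : ℝ → ℝ := fun x => (1 / Real.sqrt m) * (b - x) ^ (-(1/2) : ℝ) with hf
  have hgcont : ContinuousOn g (Icc a b) := fun x hx => (hg' x hx).continuousWithinAt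
  -- pointwise bound
  have key : ∀ x ∈ Icc a b, 1 / Real.sqrt (g x) ≤ f x := by
    intro x hx
    rcases eq_or_lt_of_le hx.2 with rfl | hxb
    · simp [hf, hb, Real.zero_rpow (by norm_num : (-(1/2) : ℝ) ≠ 0)]
    · have hgx : 0 < g x := hpos x ⟨hx.1, hxb⟩
      have hmx : m * (b - x) ≤ g x := by
        obtain ⟨c, hc, hceq⟩ := exists_hasDerivAt_eq_slope g g' hxb
          (hgcont.mono (Icc_subset_Icc hx.1 le_rfl))
          (fun y hy => (hg' y ⟨hx.1.trans hy.1.le, hy.2.le⟩).hasDerivAt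
            (Icc_mem_nhds (hx.1.trans_lt hy.1) hy.2))
        have hcmem : c ∈ Icc a b := ⟨hx.1.trans hc.1.le, hc.2.le⟩
        have := hbound c hcmem
        rw [hceq, hb, zero_sub, abs_div, abs_neg, abs_of_pos hgx,
          abs_of_pos (by linarith : (0:ℝ) < b - x)] at this
        rw [le_div_iff₀ (by linarith)] at this
        linarith
      have h1 : Real.sqrt (m * (b - x)) ≤ Real.sqrt (g x) := Real.sqrt_le_sqrt hmx
      have h2 : 0 < Real.sqrt (m * (b - x)) :=
        Real.sqrt_pos.mpr (mul_pos hm (by linarith))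
      have : 1 / Real.sqrt (g x) ≤ 1 / Real.sqrt (m * (b - x)) :=
        one_div_le_one_div_of_le h2 h1
      calc 1 / Real.sqrt (g x) ≤ 1 / Real.sqrt (m * (b - x)) := this
        _ = f x := by
            simp only [hf]
            rw [Real.sqrt_mul hm.le, Real.rpow_neg (by linarith : (0:ℝ) ≤ b - x),
              ← Real.sqrt_eq_rpow]
            field_simp
  have hint0 : IntervalIntegrable (fun u : ℝ => u ^ (-(1/2) : ℝ)) MeasureTheory.volume 0 (b - a) :=
    intervalIntegral.intervalIntegrable_rpow' (by norm_num)
  have hint1 : IntervalIntegrable (fun x : ℝ => (b - x) ^ (-(1/2) : ℝ)) MeasureTheory.volume a b := by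
    have := (hint0.comp_sub_left b).symm
    simpa using this
  have hint : IntegrableOn f (Icc a b) := by
    rw [integrableOn_Icc_iff_integrableOn_Ioc]
    exact ((intervalIntegrable_iff_integrableOn_Ioc_of_le hab.le).mp hint1).const_mul _
  have hnn : 0 ≤ᵐ[MeasureTheory.volume.restrict (Icc a b)] f := by
    filter_upwards [ae_restrict_mem measurableSet_Icc] with x hx
    exact mul_nonneg (by positivity) (Real.rpow_nonneg (by linarith [hx.2]) _)
  have hval : ∫ x in Icc a b, f x = 2 * Real.sqrt (b - a) / Real.sqrt m := by
    rw [integral_Icc_eq_integral_Ioc, ← intervalIntegral.integral_of_le hab.le]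
    have : ∫ x in a..b, f x = (1 / Real.sqrt m) * ∫ x in a..b, (b - x) ^ (-(1/2) : ℝ) := by
      simp only [hf]
      rw [intervalIntegral.integral_const_mul]
    rw [this, intervalIntegral.integral_comp_sub_left (fun u : ℝ => u ^ (-(1/2) : ℝ)) b,
      sub_self, integral_rpow (Or.inl (by norm_num))]
    rw [show (-(1/2:ℝ) + 1) = 1/2 by norm_num, ← Real.sqrt_eq_rpow]
    field_simp
    ring
  calc ∫⁻ x in Icc a b, ENNReal.ofReal (1 / Real.sqrt (g x))
      ≤ ∫⁻ x in Icc a b, ENNReal.ofReal (f x) := by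
        refine lintegral_mono_ae ?_
        filter_upwards [ae_restrict_mem measurableSet_Icc] with x hx
        exact ENNReal.ofReal_le_ofReal (key x hx)
    _ = ENNReal.ofReal (∫ x in Icc a b, f x) :=
        (ofReal_integral_eq_lintegral_ofReal hint hnn).symm
    _ = ENNReal.ofReal (2 * Real.sqrt (b - a) / Real.sqrt m) := by rw [hval]
end

section
/- There exists a C^∞ function φ : ℝ → ℝ with φ(x) > 0 for all x > 0 such that: (i) for every M > 0, the Lebesgue measure of {x ≥ 0 : φ(x) ≤ M} is finite; (ii) for every α > 0, the Lebesgue integral of φ(x)^{−1/2} over the set {x ≥ 0 : φ(x) ≥ α} is finite; and (iii) the Lebesgue integral of φ(x)^{−1/2} over (0, ∞) is infinite. -/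
open MeasureTheory Set

private lemma phi_meas : Measurable fun x : ℝ => 1 / Real.sqrt (x ^ 2 + x ^ 4) := by
  have : Continuous fun x : ℝ => Real.sqrt (x ^ 2 + x ^ 4) :=
    Real.continuous_sqrt.comp (by continuity)
  simpa only [one_div] using this.measurable.fun_inv

private lemma phi_top :
    ∫⁻ x in Set.Ioo (0 : ℝ) 1, ENNReal.ofReal (1 / Real.sqrt (x ^ 2 + x ^ 4)) = ⊤ := by
  by_contra h
  have hint : IntegrableOn (fun x : ℝ => 1 / Real.sqrt (x ^ 2 + x ^ 4)) (Ioo 0 1) := by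
    rw [IntegrableOn, ← lintegral_ofReal_ne_top_iff_integrable
      (phi_meas.aestronglyMeasurable) ?_]
    · exact h
    · filter_upwards with x
      positivity
  -- then x⁻¹ is integrable on Ioo 0 1, contradiction
  have hinv : IntegrableOn (fun x : ℝ => x⁻¹) (Ioo 0 1) := by
    refine (hint.smul (Real.sqrt 2)).mono' measurable_inv.aestronglyMeasurable ?_
    filter_upwards [ae_restrict_mem measurableSet_Ioo] with x hx
    have hx0 : 0 < x := hx.1
    have hx1 : x < 1 := hx.2
    have h1 : x ^ 2 + x ^ 4 ≤ 2 * x ^ 2 := by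
      have hx2 : x ^ 2 ≤ 1 := by nlinarith
      nlinarith [mul_le_mul_of_nonneg_left hx2 (sq_nonneg x)]
    have h2 : Real.sqrt (x ^ 2 + x ^ 4) ≤ Real.sqrt 2 * x := by
      rw [show Real.sqrt 2 * x = Real.sqrt (2 * x ^ 2) by
        rw [Real.sqrt_mul (by norm_num), Real.sqrt_sq hx0.le]]
      exact Real.sqrt_le_sqrt h1
    have h3 : 0 < Real.sqrt (x ^ 2 + x ^ 4) := Real.sqrt_pos.2 (by positivity)
    rw [norm_inv, Real.norm_eq_abs, abs_of_pos hx0]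
    have h4 : x⁻¹ ≤ Real.sqrt 2 * (1 / Real.sqrt (x ^ 2 + x ^ 4)) := by
      rw [mul_one_div, le_div_iff₀ h3, inv_mul_le_iff₀ hx0]
      nlinarith [h2, Real.sqrt_nonneg (2 : ℝ)]
    simpa [smul_eq_mul, one_div] using h4
  have : IntervalIntegrable (fun x : ℝ => x⁻¹) volume 0 1 := by
    rwa [intervalIntegrable_iff_integrableOn_Ioo_of_le zero_le_one]
  rw [intervalIntegrable_inv_iff] at this
  rcases this with h01 | h0
  · norm_num at h01
  · exact h0 (by simp [Set.uIcc_of_le (zero_le_one (α := ℝ))])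

/-- There is a smooth positive function `φ` on `(0, ∞)` whose sublevel sets have finite
measure, whose integrals of `φ^{-1/2}` over superlevel sets are finite, but with
`∫_0^∞ φ^{-1/2} = ∞`. -/
theorem exists_smooth_incomplete_except_orthogonal :
    ∃ φ : ℝ → ℝ, ContDiff ℝ (⊤ : ℕ∞) φ ∧ (∀ x > (0 : ℝ), 0 < φ x) ∧
      (∀ M > (0 : ℝ), volume {x : ℝ | 0 ≤ x ∧ φ x ≤ M} < ⊤) ∧
      (∀ α > (0 : ℝ),
        ∫⁻ x in {x : ℝ | 0 ≤ x ∧ α ≤ φ x},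
          ENNReal.ofReal (1 / Real.sqrt (φ x)) < ⊤) ∧
      ∫⁻ x in Ioi (0 : ℝ), ENNReal.ofReal (1 / Real.sqrt (φ x)) = ⊤ := by
  refine ⟨fun x => x ^ 2 + x ^ 4, ?_, ?_, ?_, ?_, ?_⟩
  · exact (contDiff_id.pow 2).add (contDiff_id.pow 4)
  · intro x hx; positivity
  · -- sublevel sets have finite measure
    intro M hM
    have hsub : {x : ℝ | 0 ≤ x ∧ x ^ 2 + x ^ 4 ≤ M} ⊆ Icc 0 (Real.sqrt M) := by
      rintro x ⟨hx0, hxM⟩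
      refine ⟨hx0, ?_⟩
      have : x ^ 2 ≤ M := by nlinarith
      calc x = Real.sqrt (x ^ 2) := (Real.sqrt_sq hx0).symm
        _ ≤ Real.sqrt M := Real.sqrt_le_sqrt this
    calc volume {x : ℝ | 0 ≤ x ∧ x ^ 2 + x ^ 4 ≤ M} ≤ volume (Icc 0 (Real.sqrt M)) :=
          measure_mono hsub
      _ < ⊤ := by rw [Real.volume_Icc]; exact ENNReal.ofReal_lt_top
  · -- superlevel integrals finite
    intro α hα
    set S : Set ℝ := {x : ℝ | 0 ≤ x ∧ α ≤ x ^ 2 + x ^ 4} with hS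
    have hSsplit : S = (S ∩ Iic 1) ∪ (S ∩ Ioi 1) := by
      ext x; simp only [mem_union, mem_inter_iff, mem_Iic, mem_Ioi]
      constructor
      · intro hx
        rcases le_or_gt x 1 with h | h
        · exact Or.inl ⟨hx, h⟩
        · exact Or.inr ⟨hx, h⟩
      · rintro (⟨hx, _⟩ | ⟨hx, _⟩) <;> exact hx
    have h1 : ∫⁻ x in S ∩ Iic 1, ENNReal.ofReal (1 / Real.sqrt (x ^ 2 + x ^ 4)) < ⊤ := by
      have hle : ∀ x ∈ S ∩ Iic 1,
          ENNReal.ofReal (1 / Real.sqrt (x ^ 2 + x ^ 4)) ≤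
            ENNReal.ofReal (1 / Real.sqrt α) := by
        rintro x ⟨⟨hx0, hxα⟩, -⟩
        apply ENNReal.ofReal_le_ofReal
        apply one_div_le_one_div_of_le (Real.sqrt_pos.2 hα)
        exact Real.sqrt_le_sqrt hxα
      calc ∫⁻ x in S ∩ Iic 1, ENNReal.ofReal (1 / Real.sqrt (x ^ 2 + x ^ 4))
          ≤ ∫⁻ (_x : ℝ) in S ∩ Iic 1, ENNReal.ofReal (1 / Real.sqrt α) :=
            setLIntegral_mono measurable_const hle
        _ = ENNReal.ofReal (1 / Real.sqrt α) * volume (S ∩ Iic 1) := by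
            rw [setLIntegral_const]
        _ ≤ ENNReal.ofReal (1 / Real.sqrt α) * volume (Icc (0 : ℝ) 1) := by
            refine mul_le_mul_right (measure_mono ?_) _
            rintro x ⟨⟨hx0, -⟩, hx1⟩
            exact ⟨hx0, hx1⟩
        _ < ⊤ := by
            rw [Real.volume_Icc]
            exact ENNReal.mul_lt_top ENNReal.ofReal_lt_top ENNReal.ofReal_lt_top
    have h2 : ∫⁻ x in S ∩ Ioi 1, ENNReal.ofReal (1 / Real.sqrt (x ^ 2 + x ^ 4)) < ⊤ := by
      have hIoi : IntegrableOn (fun x : ℝ => x ^ (-2 : ℝ)) (Ioi 1) :=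
        integrableOn_Ioi_rpow_of_lt (by norm_num) one_pos
      have htop : ∫⁻ x in Ioi (1 : ℝ), ENNReal.ofReal (x ^ (-2 : ℝ)) < ⊤ :=
        hIoi.lintegral_lt_top
      refine lt_of_le_of_lt ?_ htop
      calc ∫⁻ x in S ∩ Ioi 1, ENNReal.ofReal (1 / Real.sqrt (x ^ 2 + x ^ 4))
          ≤ ∫⁻ x in Ioi 1, ENNReal.ofReal (1 / Real.sqrt (x ^ 2 + x ^ 4)) :=
            lintegral_mono_set inter_subset_right
        _ ≤ ∫⁻ x in Ioi 1, ENNReal.ofReal (x ^ (-2 : ℝ)) := by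
            refine setLIntegral_mono (by fun_prop) ?_
            intro x hx
            have hx1 : (1 : ℝ) < x := hx
            have hx0 : 0 < x := lt_trans one_pos hx1
            apply ENNReal.ofReal_le_ofReal
            have hsq : x ^ 2 ≤ Real.sqrt (x ^ 2 + x ^ 4) := by
              calc x ^ 2 = Real.sqrt ((x ^ 2) ^ 2) := (Real.sqrt_sq (by positivity)).symm
                _ ≤ Real.sqrt (x ^ 2 + x ^ 4) := Real.sqrt_le_sqrt (by nlinarith [sq_nonneg x])
            rw [Real.rpow_neg hx0.le, ← one_div]
            apply one_div_le_one_div_of_le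
            · positivity
            · rw [show (2 : ℝ) = ((2 : ℕ) : ℝ) by norm_num, Real.rpow_natCast]
              exact hsq
    calc ∫⁻ x in S, ENNReal.ofReal (1 / Real.sqrt (x ^ 2 + x ^ 4))
        = ∫⁻ x in (S ∩ Iic 1) ∪ (S ∩ Ioi 1),
            ENNReal.ofReal (1 / Real.sqrt (x ^ 2 + x ^ 4)) := by rw [← hSsplit]
      _ ≤ _ + _ := lintegral_union_le _ _ _
      _ < ⊤ := ENNReal.add_lt_top.2 ⟨h1, h2⟩
  · -- total integral infinite
    have hmono : ∫⁻ x in Set.Ioo (0 : ℝ) 1, ENNReal.ofReal (1 / Real.sqrt (x ^ 2 + x ^ 4))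
        ≤ ∫⁻ x in Ioi (0 : ℝ), ENNReal.ofReal (1 / Real.sqrt (x ^ 2 + x ^ 4)) :=
      lintegral_mono_set Ioo_subset_Ioi_self
    rw [phi_top] at hmono
    exact top_le_iff.mp hmono
end

section
/- For x > 0 set f(x) = sin²(1/√x), and for each integer i ≥ 1 set Iᵢ = [1/(π(i+1))², 1/(πi)²]. Then for every real C with 0 < C < 1, the sum over i ≥ 1 of the Lebesgue integrals of (C² − f(x))^{−1/2} over the sets {x ∈ Iᵢ : f(x) < C²} is finite. -/
/-!
Substituting `t = 1 / √x` turns the `i`-th band into `[π (i + 1), π (i + 2)]` with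
`dx = 2 t⁻³ dt`, so its integral is at most `2 / (π (i + 1))³` times the integral of the
π-periodic density `(C² - sin² t)^(-1/2)` (cut off where `sin² t ≥ C²`) over one period, and
`∑ (i + 1)⁻³ < ∞`. On `[0, π]` the density blows up only at `arcsin C` and `π - arcsin C`, where
`C² - sin² t` vanishes at least linearly (`sin a - sin u = 2 sin ((a - u) / 2) cos ((a + u) / 2)`
and Jordan's inequality), so it is dominated by integrable inverse square roots.
-/

open MeasureTheory Set Real Function
open scoped ENNReal

theorem Function.Periodic.setLIntegral_Icc_mul_nat {F : ℝ → ℝ≥0∞} {p : ℝ} (hF : Periodic F p)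
    (n : ℕ) : ∫⁻ t in Icc (p * n) (p * (n + 1)), F t = ∫⁻ t in Icc 0 p, F t := by
  have hpre : (· + p * n) ⁻¹' Icc (p * n) (p * (n + 1)) = Icc 0 p := by
    rw [preimage_add_const_Icc, sub_self, show p * (n + 1) - p * n = p by ring]
  rw [← (measurePreserving_add_right volume (p * n)).setLIntegral_comp_preimage_emb
    (measurableEmbedding_addRight _), hpre]
  exact lintegral_congr fun t => by rw [mul_comm p]; exact hF.nat_mul n t

theorem hasDerivAt_one_div_sq {t : ℝ} (ht : t ≠ 0) :
    HasDerivAt (fun t : ℝ => 1 / t ^ 2) (-2 / t ^ 3) t := by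
  have h := (hasDerivAt_pow 2 t).fun_inv (pow_ne_zero 2 ht)
  rw [show -((2 : ℕ) * t ^ (2 - 1)) / (t ^ 2) ^ 2 = -2 / t ^ 3 by field_simp; ring] at h
  simp only [one_div]
  exact h

theorem one_div_sqrt_one_div_sq {t : ℝ} (ht : 0 < t) : 1 / √(1 / t ^ 2) = t := by
  rw [sqrt_div' _ (sq_nonneg t), sqrt_one, sqrt_sq ht.le, one_div_one_div]

theorem lintegral_image_one_div_sq {s : Set ℝ} (hs : MeasurableSet s) (hs0 : s ⊆ Ioi 0)
    (g : ℝ → ℝ≥0∞) :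
    ∫⁻ x in (fun t => 1 / t ^ 2) '' s, g x =
      ∫⁻ t in s, ENNReal.ofReal (2 / t ^ 3) * g (1 / t ^ 2) := by
  have hinj : InjOn (fun t : ℝ => 1 / t ^ 2) s := fun x hx y hy hxy => by
    have hsq : x ^ 2 = y ^ 2 := by simpa using hxy
    exact (pow_left_inj₀ (hs0 hx).le (hs0 hy).le two_ne_zero).1 hsq
  rw [lintegral_image_eq_lintegral_abs_deriv_mul hs
    (fun t ht => (hasDerivAt_one_div_sq (hs0 ht).ne').hasDerivWithinAt) hinj]
  refine setLIntegral_congr_fun hs fun t ht => ?_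
  have ht0 : 0 < t := hs0 ht
  rw [abs_div, abs_neg, abs_two, abs_of_pos (pow_pos ht0 3)]

theorem image_one_div_sq_Icc_inter {A B : ℝ} (hA : 0 < A) (hAB : A ≤ B) (s : Set ℝ) :
    (fun t => 1 / t ^ 2) '' (Icc A B ∩ s) =
      {x | x ∈ Icc (1 / B ^ 2) (1 / A ^ 2) ∧ 1 / √x ∈ s} := by
  ext x
  constructor
  · rintro ⟨t, ⟨⟨hAt, htB⟩, hts⟩, rfl⟩
    dsimp only
    have ht : 0 < t := hA.trans_le hAt
    refine ⟨⟨?_, ?_⟩, by rwa [one_div_sqrt_one_div_sq ht]⟩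
    · gcongr
    · gcongr
  · rintro ⟨⟨hBx, hxA⟩, hxs⟩
    have hB : 0 < B := hA.trans_le hAB
    have hx : 0 < x := (by positivity : (0 : ℝ) < 1 / B ^ 2).trans_le hBx
    refine ⟨1 / √x, ⟨⟨?_, ?_⟩, hxs⟩, ?_⟩
    · rw [le_one_div hA (sqrt_pos.2 hx), sqrt_le_left (by positivity), one_div_pow]
      exact hxA
    · rw [one_div_le (sqrt_pos.2 hx) hB, le_sqrt (by positivity) hx.le, one_div_pow]
      exact hBx
    · dsimp only
      rw [div_pow, sq_sqrt hx.le, one_pow, one_div_one_div]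

theorem setLIntegral_comp_one_div_sqrt_le {A B : ℝ} (hA : 0 < A) (hAB : A ≤ B) {s : Set ℝ}
    (hs : MeasurableSet s) (g : ℝ → ℝ≥0∞) :
    ∫⁻ x in {x | x ∈ Icc (1 / B ^ 2) (1 / A ^ 2) ∧ 1 / √x ∈ s}, g (1 / √x)
      ≤ ENNReal.ofReal (2 / A ^ 3) * ∫⁻ t in Icc A B, s.indicator g t := by
  have hIs : MeasurableSet (Icc A B ∩ s) := measurableSet_Icc.inter hs
  have hpos : ∀ t ∈ Icc A B ∩ s, 0 < t := fun t ht => hA.trans_le ht.1.1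
  rw [← image_one_div_sq_Icc_inter hA hAB, lintegral_image_one_div_sq hIs hpos,
    setLIntegral_indicator hs, inter_comm s, ← lintegral_const_mul' _ _ ENNReal.ofReal_ne_top]
  refine setLIntegral_mono' hIs fun t ht => ?_
  have ht0 := hpos t ht
  rw [one_div_sqrt_one_div_sq ht0]
  gcongr
  exact ht.1.1

theorem mul_sub_le_sin_sub_sin {u a : ℝ} (hu : 0 ≤ u) (hua : u ≤ a) (ha : a ≤ π / 2) :
    2 / π * cos a * (a - u) ≤ sin a - sin u := by
  have hsin : 2 / π * ((a - u) / 2) ≤ sin ((a - u) / 2) := mul_le_sin (by linarith) (by linarith)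
  have hcos : cos a ≤ cos ((a + u) / 2) :=
    cos_le_cos_of_nonneg_of_le_pi (by linarith) (by linarith [pi_pos]) (by linarith)
  have hcos0 : 0 ≤ cos a := cos_nonneg_of_mem_Icc ⟨by linarith [pi_pos], ha⟩
  rw [sin_sub_sin]
  nlinarith [mul_le_mul hsin hcos hcos0
    (sin_nonneg_of_nonneg_of_le_pi (by linarith) (by linarith [pi_pos]))]

theorem lt_arcsin_and_mul_sub_le_sq_sub_sin_sq {C u : ℝ} (hC : C ≤ 1) (hu : 0 ≤ u)
    (hu' : u ≤ π / 2) (hsin : sin u < C) :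
    u < arcsin C ∧ 2 * C * cos (arcsin C) / π * (arcsin C - u) ≤ C ^ 2 - sin u ^ 2 := by
  have hsin0 : 0 ≤ sin u := sin_nonneg_of_nonneg_of_le_pi hu (by linarith [pi_pos])
  have hua : u < arcsin C :=
    calc u = arcsin (sin u) := (arcsin_sin (by linarith) hu').symm
      _ < arcsin C := arcsin_lt_arcsin (by linarith) hsin hC
  refine ⟨hua, ?_⟩
  have hlin := mul_sub_le_sin_sub_sin hu hua.le (arcsin_le_pi_div_two C)
  rw [sin_arcsin (by linarith) hC] at hlin
  have hfactor : C * (C - sin u) ≤ C ^ 2 - sin u ^ 2 := by nlinarith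
  calc 2 * C * cos (arcsin C) / π * (arcsin C - u)
      = C * (2 / π * cos (arcsin C) * (arcsin C - u)) := by ring
    _ ≤ C * (C - sin u) := by gcongr; linarith
    _ ≤ C ^ 2 - sin u ^ 2 := hfactor

theorem ofReal_one_div_sqrt_le {c d X : ℝ} (hc : 0 < c) (hd : 0 < d) (h : c * d ≤ X) :
    ENNReal.ofReal (1 / √X) ≤ ENNReal.ofReal (1 / √c) * ENNReal.ofReal (d ^ (-(1 / 2) : ℝ)) := by
  rw [← ENNReal.ofReal_mul (by positivity), rpow_neg hd.le, ← sqrt_eq_rpow, ← one_div,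
    div_mul_div_comm, one_mul, ← sqrt_mul hc.le]
  exact ENNReal.ofReal_le_ofReal (one_div_le_one_div_of_le (by positivity) (sqrt_le_sqrt h))

noncomputable def bandDensity (C : ℝ) : ℝ → ℝ≥0∞ :=
  {t | sin t ^ 2 < C ^ 2}.indicator fun t => ENNReal.ofReal (1 / √(C ^ 2 - sin t ^ 2))

theorem bandDensity_periodic (C : ℝ) : Periodic (bandDensity C) π := fun t => by
  simp only [bandDensity, indicator, mem_ofPred_eq, sin_add_pi, neg_sq]

theorem bandDensity_le {C t : ℝ} (hC0 : 0 < C) (hC1 : C < 1) (ht : t ∈ Icc 0 π) :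
    bandDensity C t ≤ ENNReal.ofReal (1 / √(2 * C * cos (arcsin C) / π)) *
      (ENNReal.ofReal ((arcsin C - t) ^ (-(1 / 2) : ℝ)) +
        ENNReal.ofReal ((t - (π - arcsin C)) ^ (-(1 / 2) : ℝ))) := by
  by_cases h : sin t ^ 2 < C ^ 2
  swap
  · simp [bandDensity, h]
  rw [bandDensity, indicator_of_mem (show t ∈ {t | sin t ^ 2 < C ^ 2} from h)]
  have hc : 0 < 2 * C * cos (arcsin C) / π := by
    have : 0 < cos (arcsin C) := by
      rw [cos_arcsin]
      exact sqrt_pos.2 (by nlinarith)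
    positivity
  have hsin : sin t < C := lt_of_pow_lt_pow_left₀ 2 hC0.le h
  rcases le_or_gt t (π / 2) with hleft | hright
  · obtain ⟨hta, hle⟩ := lt_arcsin_and_mul_sub_le_sq_sub_sin_sq hC1.le ht.1 hleft hsin
    refine (ofReal_one_div_sqrt_le hc (sub_pos.2 hta) hle).trans ?_
    gcongr
    exact le_self_add
  · obtain ⟨hta, hle⟩ := lt_arcsin_and_mul_sub_le_sq_sub_sin_sq (u := π - t) hC1.le
      (by linarith [ht.2]) (by linarith) (by rwa [sin_pi_sub])
    rw [sin_pi_sub, show arcsin C - (π - t) = t - (π - arcsin C) by ring] at hle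
    refine (ofReal_one_div_sqrt_le hc (by linarith) hle).trans ?_
    gcongr
    exact le_add_self

theorem setLIntegral_bandDensity_lt_top {C : ℝ} (hC0 : 0 < C) (hC1 : C < 1) :
    ∫⁻ t in Icc 0 π, bandDensity C t < ⊤ := by
  set a := arcsin C
  have hrpow : IntervalIntegrable (fun x : ℝ => x ^ (-(1 / 2) : ℝ)) volume (a - π) a :=
    intervalIntegral.intervalIntegrable_rpow' (by norm_num)
  have hleft : IntegrableOn (fun t => (a - t) ^ (-(1 / 2) : ℝ)) (Icc 0 π) := by
    have h := (hrpow.comp_sub_left a).symm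
    rw [sub_sub_cancel, sub_self] at h
    exact (intervalIntegrable_iff_integrableOn_Icc_of_le pi_pos.le).1 h
  have hright : IntegrableOn (fun t => (t - (π - a)) ^ (-(1 / 2) : ℝ)) (Icc 0 π) := by
    have h := hrpow.comp_sub_right (π - a)
    rw [sub_add_sub_cancel', sub_self, add_sub_cancel] at h
    exact (intervalIntegrable_iff_integrableOn_Icc_of_le pi_pos.le).1 h
  calc ∫⁻ t in Icc 0 π, bandDensity C t
      ≤ ∫⁻ t in Icc 0 π, ENNReal.ofReal (1 / √(2 * C * cos a / π)) *
          (ENNReal.ofReal ((a - t) ^ (-(1 / 2) : ℝ)) +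
            ENNReal.ofReal ((t - (π - a)) ^ (-(1 / 2) : ℝ))) :=
        setLIntegral_mono (by fun_prop) fun t ht => bandDensity_le hC0 hC1 ht
    _ = ENNReal.ofReal (1 / √(2 * C * cos a / π)) *
          ((∫⁻ t in Icc 0 π, ENNReal.ofReal ((a - t) ^ (-(1 / 2) : ℝ))) +
            ∫⁻ t in Icc 0 π, ENNReal.ofReal ((t - (π - a)) ^ (-(1 / 2) : ℝ))) := by
        rw [lintegral_const_mul' _ _ ENNReal.ofReal_ne_top, lintegral_add_left (by fun_prop)]
    _ < ⊤ := ENNReal.mul_lt_top ENNReal.ofReal_lt_top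
        (ENNReal.add_lt_top.2 ⟨hleft.setLIntegral_lt_top, hright.setLIntegral_lt_top⟩)

theorem setLIntegral_sin_sq_band_le (C : ℝ) (i : ℕ) :
    ∫⁻ x in {x : ℝ | x ∈ Icc (1 / (π * ((i : ℝ) + 1 + 1)) ^ 2) (1 / (π * ((i : ℝ) + 1)) ^ 2) ∧
        sin (1 / √x) ^ 2 < C ^ 2}, ENNReal.ofReal (1 / √(C ^ 2 - sin (1 / √x) ^ 2))
      ≤ ENNReal.ofReal (2 / (π * ((i : ℝ) + 1)) ^ 3) * ∫⁻ t in Icc 0 π, bandDensity C t := by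
  have hperiod := (bandDensity_periodic C).setLIntegral_Icc_mul_nat (i + 1)
  push_cast at hperiod
  rw [← hperiod]
  exact setLIntegral_comp_one_div_sqrt_le (by positivity) (by nlinarith [pi_pos])
    (measurableSet_lt (by fun_prop) measurable_const) _

/-- The incomplete surface with complete space of Killing orbits: with
`f(x) = sin²(1/√x)` and `Iᵢ = [1/(π(i+1))², 1/(πi)²]`, for every `0 < C < 1` the total
time `∑ᵢ ∫_{x ∈ Iᵢ, f x < C²} (C² - f x)^{-1/2} dx` spent crossing the bands is finite. -/
theorem tsum_lintegral_lt_top_sin_sq_bands (C : ℝ) (hC0 : 0 < C) (hC1 : C < 1) :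
    (∑' i : ℕ,
      ∫⁻ x in {x : ℝ | x ∈ Icc (1 / (π * ((i : ℝ) + 1 + 1)) ^ 2)
            (1 / (π * ((i : ℝ) + 1)) ^ 2) ∧
          Real.sin (1 / Real.sqrt x) ^ 2 < C ^ 2},
        ENNReal.ofReal (1 / Real.sqrt (C ^ 2 - Real.sin (1 / Real.sqrt x) ^ 2))) < ⊤ := by
  have hsummable : Summable fun i : ℕ => 2 / (π * ((i : ℝ) + 1)) ^ 3 := by
    have h := (summable_nat_add_iff 1).2 (summable_one_div_nat_pow.2 (by norm_num : 1 < 3))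
    refine (h.mul_left (2 / π ^ 3)).congr fun i => ?_
    push_cast
    field_simp
  have hsum : ∑' i : ℕ, ENNReal.ofReal (2 / (π * ((i : ℝ) + 1)) ^ 3) < ⊤ := by
    rw [← ENNReal.ofReal_tsum_of_nonneg (fun i => by positivity) hsummable]
    exact ENNReal.ofReal_lt_top
  calc _ ≤ ∑' i : ℕ, ENNReal.ofReal (2 / (π * ((i : ℝ) + 1)) ^ 3) *
          ∫⁻ t in Icc 0 π, bandDensity C t :=
        ENNReal.tsum_le_tsum (setLIntegral_sin_sq_band_le C)
    _ = (∑' i : ℕ, ENNReal.ofReal (2 / (π * ((i : ℝ) + 1)) ^ 3)) *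
          ∫⁻ t in Icc 0 π, bandDensity C t := ENNReal.tsum_mul_right
    _ < ⊤ := ENNReal.mul_lt_top hsum (setLIntegral_bandDensity_lt_top hC0 hC1)
end
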